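/- Under the stated assumptions on σ and the data, the gradient of the regularized logistic empirical risk is Lipschitz: the map W ↦ ∇L̃(W) on ℝ^{p×d} (with Frobenius norm) is Lipschitz with constant at most √p·( √p·‖a‖₂²·M_D²·B_x²/4 + ((2 + ‖c‖₂ + ‖a‖₂·B_σ)/4)·M_D′·B_x²·‖a‖₂·p + λ ). In particular L̃ is gradient-Lipschitz (smooth) with a finite smoothness coefficient gLip(L̃). -/

import Mathlib

open MeasureTheory Real Filter

noncomputable section

/-- The `j`-th row of a weight matrix `W ∈ ℝ^{p×d}` (Frobenius/Euclidean structure). -/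
def row {p d : ℕ} (W : EuclideanSpace ℝ (Fin p × Fin d)) (j : Fin p) :
    EuclideanSpace ℝ (Fin d) :=
  WithLp.toLp 2 (fun k => W (j, k))

/-- Replace the `j`-th row of `W` by `v`. -/
def updRow {p d : ℕ} (W : EuclideanSpace ℝ (Fin p × Fin d)) (j : Fin p)
    (v : EuclideanSpace ℝ (Fin d)) : EuclideanSpace ℝ (Fin p × Fin d) :=
  WithLp.toLp 2 (fun q => if q.1 = j then v q.2 else W q)

/-- The depth-2 network `f(x; a, W) = ∑ⱼ aⱼ σ(⟨wⱼ, x⟩)`. -/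
def net {p d : ℕ} (σ : ℝ → ℝ) (a : EuclideanSpace ℝ (Fin p))
    (W : EuclideanSpace ℝ (Fin p × Fin d)) (x : EuclideanSpace ℝ (Fin d)) : ℝ :=
  ∑ j, a j * σ (inner ℝ (row W j) x : ℝ)

/-- The regularized logistic empirical risk. -/
def risk {p d n : ℕ} (σ : ℝ → ℝ) (a : EuclideanSpace ℝ (Fin p))
    (x : Fin n → EuclideanSpace ℝ (Fin d)) (y : Fin n → ℝ) (lam : ℝ)
    (W : EuclideanSpace ℝ (Fin p × Fin d)) : ℝ :=
  (1 / (n : ℝ)) * ∑ i, Real.log (1 + Real.exp (-(y i) * net σ a W (x i)))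
    + (lam / 2) * ‖W‖ ^ 2

/-- The second partial derivative of `g` in coordinate `q`. -/
def secondPartial {m : Type*} [Fintype m] [DecidableEq m]
    (g : EuclideanSpace ℝ m → ℝ) (W : EuclideanSpace ℝ m) (q : m) : ℝ :=
  fderiv ℝ (fun W' => fderiv ℝ g W' (EuclideanSpace.single q 1)) W
    (EuclideanSpace.single q 1)

/-- The Laplacian of `g`: sum of all second partial derivatives. -/
def lap {m : Type*} [Fintype m] [DecidableEq m]
    (g : EuclideanSpace ℝ m → ℝ) (W : EuclideanSpace ℝ m) : ℝ :=
  ∑ q, secondPartial g W q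

/-- The partial Laplacian of `g` in the coordinates of row `j`. -/
def rowLap {p d : ℕ} (g : EuclideanSpace ℝ (Fin p × Fin d) → ℝ)
    (W : EuclideanSpace ℝ (Fin p × Fin d)) (j : Fin p) : ℝ :=
  ∑ k, secondPartial g W (j, k)

/-- The gradient of `g` with respect to the row `wⱼ`, all other rows held fixed. -/
def gradRow {p d : ℕ} (g : EuclideanSpace ℝ (Fin p × Fin d) → ℝ)
    (W : EuclideanSpace ℝ (Fin p × Fin d)) (j : Fin p) : EuclideanSpace ℝ (Fin d) :=
  gradient (fun v => g (updRow W j v)) (row W j)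

/-- The Gibbs measure with density `(1/Z_s) exp(-2 g(W)/s)` w.r.t. Lebesgue measure. -/
def gibbs {m : Type*} [Fintype m] (g : EuclideanSpace ℝ m → ℝ) (s : ℝ) :
    Measure (EuclideanSpace ℝ m) :=
  volume.withDensity fun W =>
    ENNReal.ofReal ((∫ W', Real.exp (-2 * g W' / s))⁻¹ * Real.exp (-2 * g W / s))

end

/- ------------------------------------------------------------------
   Auxiliary machinery for the proof of `risk_gradient_lipschitz`.
   ------------------------------------------------------------------ -/

noncomputable section

namespace RGL

/-- The logistic sigmoid. -/
def sg (t : ℝ) : ℝ := Real.exp t / (1 + Real.exp t)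

lemma sg_nonneg (t : ℝ) : 0 ≤ sg t := by
  unfold sg; positivity

lemma hasDerivAt_aux (t : ℝ) :
    HasDerivAt (fun u => (2 + u) * (1 + Real.exp (-u))) (1 - (1 + t) * Real.exp (-t)) t := by
  have h1 : HasDerivAt (fun u : ℝ => 2 + u) 1 t := (hasDerivAt_id t).const_add 2
  have h2 : HasDerivAt (fun u : ℝ => 1 + Real.exp (-u)) (-Real.exp (-t)) t := by
    have h : HasDerivAt (fun u : ℝ => Real.exp (-u)) (Real.exp (-t) * (-1)) t :=
      (Real.hasDerivAt_exp (-t)).comp t ((hasDerivAt_id t).neg)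
    simpa using h.const_add 1
  have h := h1.mul h2
  refine h.congr_deriv ?_
  ring

lemma four_le_aux {s : ℝ} (hs : 0 ≤ s) : 4 ≤ (2 + s) * (1 + Real.exp (-s)) := by
  have mono : MonotoneOn (fun u => (2 + u) * (1 + Real.exp (-u))) (Set.Ici (0:ℝ)) := by
    apply monotoneOn_of_deriv_nonneg (convex_Ici 0)
    · exact (Continuous.mul (by continuity) (by continuity)).continuousOn
    · intro t _
      exact (hasDerivAt_aux t).differentiableAt.differentiableWithinAt
    · intro t _
      rw [(hasDerivAt_aux t).deriv]
      have h := Real.add_one_le_exp t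
      have ht0 : (0:ℝ) < Real.exp (-t) := Real.exp_pos _
      have h2 : (1 + t) * Real.exp (-t) ≤ 1 := by
        rw [Real.exp_neg, mul_inv_le_iff₀' (Real.exp_pos t)]
        linarith
      linarith
  have h0 := mono Set.self_mem_Ici hs hs
  norm_num at h0
  linarith

lemma sg_le {t G : ℝ} (hG : 0 ≤ G) (ht : t ≤ G) : sg t ≤ (2 + G) / 4 := by
  unfold sg
  have h1 : Real.exp t / (1 + Real.exp t) ≤ Real.exp G / (1 + Real.exp G) := by
    have e1 := Real.exp_pos t
    have e2 := Real.exp_pos G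
    have h := Real.exp_le_exp.mpr ht
    rw [div_le_div_iff₀ (by positivity) (by positivity)]
    nlinarith
  have h2 : Real.exp G / (1 + Real.exp G) ≤ (2 + G) / 4 := by
    have h4 := four_le_aux hG
    have e2 := Real.exp_pos G
    have eneg : Real.exp (-G) = (Real.exp G)⁻¹ := Real.exp_neg G
    rw [div_le_div_iff₀ (by positivity) (by norm_num)]
    rw [eneg] at h4
    have h5 := mul_le_mul_of_nonneg_right h4 (le_of_lt e2)
    calc Real.exp G * 4 = 4 * Real.exp G := by ring
      _ ≤ ((2 + G) * (1 + (Real.exp G)⁻¹)) * Real.exp G := h5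
      _ = (2 + G) * (Real.exp G + 1) := by field_simp
      _ = (2 + G) * (1 + Real.exp G) := by ring
  linarith

lemma sg_lip (a b : ℝ) : |sg a - sg b| ≤ |a - b| / 4 := by
  have hd : ∀ s : ℝ, HasDerivAt sg (Real.exp s / (1 + Real.exp s) ^ 2) s := by
    intro s
    have h1 : HasDerivAt (fun t => 1 + Real.exp t) (Real.exp s) s :=
      (Real.hasDerivAt_exp s).const_add 1
    have h := (Real.hasDerivAt_exp s).div h1 (by positivity)
    refine h.congr_deriv ?_
    ring
  have hlip : LipschitzWith (1/4 : NNReal) sg := by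
    apply lipschitzWith_of_nnnorm_deriv_le (fun s => (hd s).differentiableAt)
    intro s
    rw [← NNReal.coe_le_coe, coe_nnnorm, (hd s).deriv]
    have e := Real.exp_pos s
    rw [Real.norm_eq_abs, abs_of_pos (by positivity), div_le_iff₀ (by positivity)]
    push_cast [NNReal.coe_div]
    nlinarith [sq_nonneg (1 - Real.exp s)]
  have h := hlip.dist_le_mul a b
  rw [Real.dist_eq, Real.dist_eq] at h
  push_cast [NNReal.coe_div] at h
  linarith

/-- Coerce a plain function into `EuclideanSpace`. -/
def vec {ι : Type*} [Fintype ι] (f : ι → ℝ) : EuclideanSpace ℝ ι := WithLp.toLp 2 f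

@[simp] lemma vec_apply {ι : Type*} [Fintype ι] (f : ι → ℝ) (i : ι) :
    vec f i = f i := rfl

lemma norm_eq_sqrt {ι : Type*} [Fintype ι] (v : EuclideanSpace ℝ ι) :
    ‖v‖ = Real.sqrt (∑ i, v i ^ 2) := by
  rw [EuclideanSpace.norm_eq]; simp [sq_abs]

lemma norm_sq_eq {ι : Type*} [Fintype ι] (v : EuclideanSpace ℝ ι) :
    ‖v‖ ^ 2 = ∑ i, v i ^ 2 := by
  rw [norm_eq_sqrt, Real.sq_sqrt]
  positivity

lemma norm_le_of_abs_le {ι : Type*} [Fintype ι] (u v : EuclideanSpace ℝ ι)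
    (h : ∀ i, |u i| ≤ v i) : ‖u‖ ≤ ‖v‖ := by
  rw [norm_eq_sqrt, norm_eq_sqrt]
  apply Real.sqrt_le_sqrt
  apply Finset.sum_le_sum
  intro i _
  calc u i ^ 2 = |u i| ^ 2 := (sq_abs _).symm
    _ ≤ v i ^ 2 := by
        have h0 : (0:ℝ) ≤ |u i| := abs_nonneg _
        nlinarith [h i]

lemma norm_vec_abs {ι : Type*} [Fintype ι] (v : EuclideanSpace ℝ ι) :
    ‖vec (fun i => |v i|)‖ = ‖v‖ := by
  rw [norm_eq_sqrt, norm_eq_sqrt]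
  simp [sq_abs]

lemma norm_vec_smul {ι : Type*} [Fintype ι] (c : ℝ) (f : ι → ℝ) :
    ‖vec (fun i => c * f i)‖ = |c| * ‖vec f‖ := by
  have h : vec (fun i => c * f i) = c • vec f := by
    ext i
    simp [vec, PiLp.smul_apply, smul_eq_mul]
  rw [h, norm_smul, Real.norm_eq_abs]

lemma cs_sum {ι : Type*} [Fintype ι] (f g : ι → ℝ) :
    ∑ i, |f i| * |g i| ≤ Real.sqrt (∑ i, f i ^ 2) * Real.sqrt (∑ i, g i ^ 2) := by
  have h := real_inner_le_norm (F := EuclideanSpace ℝ ι)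
    (vec fun i => |f i|) (vec fun i => |g i|)
  rw [PiLp.inner_apply] at h
  simp only [RCLike.inner_apply, conj_trivial, vec_apply] at h
  rw [norm_eq_sqrt, norm_eq_sqrt] at h
  simpa [sq_abs, mul_comm] using h

lemma norm_outer {p d : ℕ} (s : ℝ) (e : Fin p → ℝ)
    (v : EuclideanSpace ℝ (Fin d)) :
    ‖vec (fun q : Fin p × Fin d => s * e q.1 * v q.2)‖ = |s| * (‖vec e‖ * ‖v‖) := by
  rw [norm_eq_sqrt, norm_eq_sqrt, norm_eq_sqrt]
  simp only [vec_apply]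
  rw [Fintype.sum_prod_type]
  have h : ∑ j, ∑ k, (s * e j * v k) ^ 2 = s ^ 2 * ((∑ j, e j ^ 2) * (∑ k, v k ^ 2)) := by
    simp only [Finset.mul_sum, Finset.sum_mul]
    rw [Finset.sum_comm]
    apply Finset.sum_congr rfl; intro j _
    apply Finset.sum_congr rfl; intro k _
    ring
  rw [h, Real.sqrt_mul (by positivity), Real.sqrt_mul (by positivity), Real.sqrt_sq_eq_abs]

lemma lip_of_deriv_bound (f : ℝ → ℝ) (hf : Differentiable ℝ f) {M : ℝ} (hM0 : 0 ≤ M)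
    (hM : ∀ t, |deriv f t| ≤ M) (s t : ℝ) : |f s - f t| ≤ M * |s - t| := by
  have hlip : LipschitzWith (⟨M, hM0⟩ : NNReal) f := by
    apply lipschitzWith_of_nnnorm_deriv_le hf
    intro z
    apply NNReal.coe_le_coe.mp
    rw [coe_nnnorm, Real.norm_eq_abs]
    exact hM z
  have h := hlip.dist_le_mul s t
  rw [Real.dist_eq, Real.dist_eq] at h
  exact h

end RGL

/-- A matrix supported on row `j`, equal to `v` there. -/
def emb {p d : ℕ} (j : Fin p) (v : EuclideanSpace ℝ (Fin d)) :
    EuclideanSpace ℝ (Fin p × Fin d) :=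
  WithLp.toLp 2 (fun q : Fin p × Fin d => if q.1 = j then v q.2 else 0)

/-- The coordinate formula for the gradient of the regularized risk. -/
def Gvec {p d n : ℕ} (σ : ℝ → ℝ) (a : EuclideanSpace ℝ (Fin p))
    (x : Fin n → EuclideanSpace ℝ (Fin d)) (y : Fin n → ℝ) (lam : ℝ)
    (W : EuclideanSpace ℝ (Fin p × Fin d)) : EuclideanSpace ℝ (Fin p × Fin d) :=
  WithLp.toLp 2 (fun q : Fin p × Fin d => (1 / (n : ℝ)) * (∑ i, RGL.sg (-(y i) * net σ a W (x i)) * (-(y i)) *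
      (a q.1 * deriv σ (inner ℝ (row W q.1) (x i) : ℝ)) * x i q.2) + lam * W q)

lemma inner_emb {p d : ℕ} (j : Fin p) (v : EuclideanSpace ℝ (Fin d))
    (W : EuclideanSpace ℝ (Fin p × Fin d)) :
    (inner ℝ (emb j v) W : ℝ) = inner ℝ (row W j) v := by
  simp only [PiLp.inner_apply, RCLike.inner_apply, conj_trivial]
  rw [Fintype.sum_prod_type]
  simp only [emb, row]
  rw [Finset.sum_comm]
  congr 1
  funext k
  simp only [ite_mul, zero_mul, mul_ite, mul_zero, Finset.sum_ite_eq', Finset.mem_univ, if_true]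
  ring

lemma hasFDerivAt_inner_row {p d : ℕ} (j : Fin p) (v : EuclideanSpace ℝ (Fin d))
    (W : EuclideanSpace ℝ (Fin p × Fin d)) :
    HasFDerivAt (fun W' : EuclideanSpace ℝ (Fin p × Fin d) => (inner ℝ (row W' j) v : ℝ))
      (innerSL ℝ (emb j v)) W := by
  have h : (fun W' : EuclideanSpace ℝ (Fin p × Fin d) => (inner ℝ (row W' j) v : ℝ))
      = fun W' => (inner ℝ (emb j v) W' : ℝ) := funext fun W' => (inner_emb j v W').symm
  rw [h]
  exact (innerSL ℝ (emb j v)).hasFDerivAt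

lemma hasDerivAt_logexp (s : ℝ) :
    HasDerivAt (fun t => Real.log (1 + Real.exp t)) (RGL.sg s) s := by
  have h1 : HasDerivAt (fun t => 1 + Real.exp t) (Real.exp s) s :=
    (Real.hasDerivAt_exp s).const_add 1
  exact h1.log (by positivity)

/-- The regularized risk has the explicit gradient `Gvec`. -/
lemma risk_hasGradientAt {p d n : ℕ} (σ : ℝ → ℝ) (hσ : ContDiff ℝ 2 σ)
    (a : EuclideanSpace ℝ (Fin p)) (x : Fin n → EuclideanSpace ℝ (Fin d))
    (y : Fin n → ℝ) (lam : ℝ) (W : EuclideanSpace ℝ (Fin p × Fin d)) :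
    HasGradientAt (risk σ a x y lam) (Gvec σ a x y lam W) W := by
  have hσd : Differentiable ℝ σ := hσ.differentiable (by norm_num)
  have step_net : ∀ i : Fin n, HasFDerivAt (fun W' => net σ a W' (x i))
      (∑ j, (a j) • ((deriv σ ((inner ℝ (row W j) (x i) : ℝ))) • innerSL ℝ (emb j (x i)))) W := by
    intro i
    apply HasFDerivAt.fun_sum
    intro j _
    exact ((hσd _).hasDerivAt.comp_hasFDerivAt W (hasFDerivAt_inner_row j (x i) W)).const_mul (a j)
  have step_log : ∀ i : Fin n,
      HasFDerivAt (fun W' => Real.log (1 + Real.exp (-(y i) * net σ a W' (x i))))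
        ((RGL.sg (-(y i) * net σ a W (x i))) • ((-(y i)) •
          (∑ j, (a j) • ((deriv σ ((inner ℝ (row W j) (x i) : ℝ))) • innerSL ℝ (emb j (x i)))))) W := by
    intro i
    exact (hasDerivAt_logexp _).comp_hasFDerivAt W ((step_net i).const_mul (-(y i)))
  have total : HasFDerivAt (risk σ a x y lam)
      ((1 / (n : ℝ)) • (∑ i, (RGL.sg (-(y i) * net σ a W (x i))) • ((-(y i)) •
          (∑ j, (a j) • ((deriv σ ((inner ℝ (row W j) (x i) : ℝ))) • innerSL ℝ (emb j (x i))))))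
        + (lam / 2) • (2 • innerSL ℝ W)) W := by
    exact ((HasFDerivAt.fun_sum (fun i _ => step_log i)).const_mul (1 / (n : ℝ))).add
      (((hasStrictFDerivAt_norm_sq W).hasFDerivAt).const_mul (lam / 2))
  rw [hasGradientAt_iff_hasFDerivAt]
  refine total.congr_fderiv ?_
  symm
  apply ContinuousLinearMap.ext
  intro U
  rw [InnerProductSpace.toDual_apply_apply]
  simp only [ContinuousLinearMap.add_apply, ContinuousLinearMap.smul_apply,
    ContinuousLinearMap.sum_apply, innerSL_apply_apply, smul_eq_mul, nsmul_eq_mul, Nat.cast_ofNat]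
  simp only [inner_emb]
  simp only [PiLp.inner_apply, RCLike.inner_apply, conj_trivial, row, Gvec]
  simp only [Fintype.sum_prod_type]
  simp only [add_mul, mul_add, Finset.sum_add_distrib, Finset.sum_mul, Finset.mul_sum]
  congr 1
  · conv_rhs => rw [Finset.sum_comm]
    apply Finset.sum_congr rfl
    intro j _
    conv_rhs => rw [Finset.sum_comm]
    apply Finset.sum_congr rfl
    intro k _
    apply Finset.sum_congr rfl
    intro i _
    ring
  · apply Finset.sum_congr rfl
    intro j _
    apply Finset.sum_congr rfl
    intro k _
    ring

/-- The `i`-th data summand of the gradient difference. -/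
def RGL.Tv {p d n : ℕ} (σ : ℝ → ℝ) (a : EuclideanSpace ℝ (Fin p))
    (x : Fin n → EuclideanSpace ℝ (Fin d)) (y : Fin n → ℝ)
    (W₁ W₂ : EuclideanSpace ℝ (Fin p × Fin d)) (i : Fin n) :
    EuclideanSpace ℝ (Fin p × Fin d) :=
  RGL.vec (fun q : Fin p × Fin d => -(y i) *
    (RGL.sg (-(y i) * net σ a W₁ (x i)) * (a q.1 * deriv σ ((inner ℝ (row W₁ q.1) (x i) : ℝ)))
      - RGL.sg (-(y i) * net σ a W₂ (x i)) * (a q.1 * deriv σ ((inner ℝ (row W₂ q.1) (x i) : ℝ))))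
    * x i q.2)

/-- Quantitative Lipschitz estimate for the explicit gradient `Gvec`. -/
lemma RGL.gvec_diff_le {p d n : ℕ} (hn : 0 < n) (σ : ℝ → ℝ)
    (M_D M_D' Bσ Bx lam : ℝ)
    (hσ : ContDiff ℝ 2 σ) (hB : ∀ t : ℝ, |σ t| ≤ Bσ) (hM : ∀ t : ℝ, |deriv σ t| ≤ M_D)
    (hM' : ∀ t : ℝ, |deriv (deriv σ) t| ≤ M_D')
    (a : EuclideanSpace ℝ (Fin p)) (x : Fin n → EuclideanSpace ℝ (Fin d)) (y : Fin n → ℝ)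
    (hx : ∀ i, ‖x i‖ ≤ Bx) (hBx : 0 ≤ Bx) (hy : ∀ i, y i = 1 ∨ y i = -1)
    (hlam : 0 < lam) (W₁ W₂ : EuclideanSpace ℝ (Fin p × Fin d)) :
    ‖Gvec σ a x y lam W₁ - Gvec σ a x y lam W₂‖ ≤
      ((2 + Real.sqrt p * ‖a‖ * Bσ) / 4 * M_D' * Bx ^ 2 * ‖a‖
          + M_D ^ 2 * ‖a‖ ^ 2 * Bx ^ 2 / 4 + lam) * ‖W₁ - W₂‖ := by
  have hn0 : (n : ℝ) ≠ 0 := Nat.cast_ne_zero.mpr hn.ne'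
  have hninv : (0:ℝ) ≤ 1 / (n : ℝ) := by positivity
  have hMD0 : 0 ≤ M_D := le_trans (abs_nonneg _) (hM 0)
  have hMD'0 : 0 ≤ M_D' := le_trans (abs_nonneg _) (hM' 0)
  have hBσ0 : 0 ≤ Bσ := le_trans (abs_nonneg _) (hB 0)
  have hna : 0 ≤ ‖a‖ := norm_nonneg a
  have hσd : Differentiable ℝ σ := hσ.differentiable (by norm_num)
  have hσ'd : Differentiable ℝ (deriv σ) :=
    (((contDiff_succ_iff_deriv (n := 1)).mp hσ).2.2).differentiable one_ne_zero
  have hy1 : ∀ i, |y i| = 1 := fun i => by rcases hy i with h | h <;> simp [h]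
  set sp := Real.sqrt p with hsp_def
  have hsp0 : 0 ≤ sp := Real.sqrt_nonneg _
  have hG0 : 0 ≤ sp * ‖a‖ * Bσ := mul_nonneg (mul_nonneg hsp0 hna) hBσ0
  set S : ℝ := (2 + sp * ‖a‖ * Bσ) / 4 with hS_def
  have hS0 : 0 ≤ S := by rw [hS_def]; linarith
  set D := W₁ - W₂ with hD_def
  have hD0 : 0 ≤ ‖D‖ := norm_nonneg D
  -- row facts
  have hrow_sum : ∑ j, ‖row D j‖ ^ 2 = ‖D‖ ^ 2 := by
    rw [RGL.norm_sq_eq D, Fintype.sum_prod_type]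
    exact Finset.sum_congr rfl fun j _ => by rw [RGL.norm_sq_eq (row D j)]; rfl
  have hrow_le : ∀ j, ‖row D j‖ ≤ ‖D‖ := by
    intro j
    have h1 : ‖row D j‖ ^ 2 ≤ ‖D‖ ^ 2 := by
      rw [← hrow_sum]
      exact Finset.single_le_sum (f := fun j => ‖row D j‖ ^ 2)
        (fun j _ => sq_nonneg _) (Finset.mem_univ j)
    nlinarith [norm_nonneg (row D j), norm_nonneg D]
  have hu_diff : ∀ (i : Fin n) (j : Fin p),
      |(inner ℝ (row W₁ j) (x i) : ℝ) - (inner ℝ (row W₂ j) (x i) : ℝ)| ≤ Bx * ‖row D j‖ := by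
    intro i j
    have hrow : row D j = row W₁ j - row W₂ j := by
      ext k; simp [hD_def, row, PiLp.sub_apply]
    have h1 : (inner ℝ (row W₁ j) (x i) : ℝ) - (inner ℝ (row W₂ j) (x i) : ℝ)
        = (inner ℝ (row D j) (x i) : ℝ) := by rw [hrow, inner_sub_left]
    rw [h1]
    calc |(inner ℝ (row D j) (x i) : ℝ)| ≤ ‖row D j‖ * ‖x i‖ := abs_real_inner_le_norm _ _
      _ ≤ ‖row D j‖ * Bx := mul_le_mul_of_nonneg_left (hx i) (norm_nonneg _)
      _ = Bx * ‖row D j‖ := mul_comm _ _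
  have hσ_lip : ∀ s t : ℝ, |σ s - σ t| ≤ M_D * |s - t| :=
    RGL.lip_of_deriv_bound σ hσd hMD0 hM
  have hσ'_lip : ∀ s t : ℝ, |deriv σ s - deriv σ t| ≤ M_D' * |s - t| :=
    RGL.lip_of_deriv_bound (deriv σ) hσ'd hMD'0 hM'
  have hsum_row : ∑ j, |a j| * ‖row D j‖ ≤ ‖a‖ * ‖D‖ := by
    have h2 := RGL.cs_sum (fun j => a j) (fun j => ‖row D j‖)
    have h3 : Real.sqrt (∑ j, a j ^ 2) = ‖a‖ := (RGL.norm_eq_sqrt a).symm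
    have h4 : Real.sqrt (∑ j, ‖row D j‖ ^ 2) = ‖D‖ := by
      rw [hrow_sum, Real.sqrt_sq (norm_nonneg D)]
    calc ∑ j, |a j| * ‖row D j‖ = ∑ j, |a j| * |‖row D j‖| := by
          simp [abs_of_nonneg (norm_nonneg _)]
      _ ≤ Real.sqrt (∑ j, a j ^ 2) * Real.sqrt (∑ j, ‖row D j‖ ^ 2) := h2
      _ = ‖a‖ * ‖D‖ := by rw [h3, h4]
  have hg_diff : ∀ i : Fin n,
      |(-(y i) * net σ a W₁ (x i)) - (-(y i) * net σ a W₂ (x i))|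
        ≤ ‖a‖ * M_D * Bx * ‖D‖ := by
    intro i
    have h1 : (-(y i) * net σ a W₁ (x i)) - (-(y i) * net σ a W₂ (x i))
        = -(y i) * (net σ a W₁ (x i) - net σ a W₂ (x i)) := by ring
    rw [h1, abs_mul, abs_neg, hy1 i, one_mul]
    have h2 : net σ a W₁ (x i) - net σ a W₂ (x i)
        = ∑ j, (a j * σ ((inner ℝ (row W₁ j) (x i) : ℝ))
            - a j * σ ((inner ℝ (row W₂ j) (x i) : ℝ))) := by
      rw [Finset.sum_sub_distrib]; rfl
    rw [h2]
    calc |∑ j, (a j * σ ((inner ℝ (row W₁ j) (x i) : ℝ))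
            - a j * σ ((inner ℝ (row W₂ j) (x i) : ℝ)))|
        ≤ ∑ j, |a j * σ ((inner ℝ (row W₁ j) (x i) : ℝ))
            - a j * σ ((inner ℝ (row W₂ j) (x i) : ℝ))| := Finset.abs_sum_le_sum_abs _ _
      _ ≤ ∑ j, |a j| * (M_D * (Bx * ‖row D j‖)) := by
          apply Finset.sum_le_sum
          intro j _
          have h3 : a j * σ ((inner ℝ (row W₁ j) (x i) : ℝ))
              - a j * σ ((inner ℝ (row W₂ j) (x i) : ℝ))
              = a j * (σ ((inner ℝ (row W₁ j) (x i) : ℝ))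
                - σ ((inner ℝ (row W₂ j) (x i) : ℝ))) := by ring
          rw [h3, abs_mul]
          apply mul_le_mul_of_nonneg_left _ (abs_nonneg _)
          calc |σ ((inner ℝ (row W₁ j) (x i) : ℝ)) - σ ((inner ℝ (row W₂ j) (x i) : ℝ))|
              ≤ M_D * |(inner ℝ (row W₁ j) (x i) : ℝ) - (inner ℝ (row W₂ j) (x i) : ℝ)| :=
                hσ_lip _ _
            _ ≤ M_D * (Bx * ‖row D j‖) := mul_le_mul_of_nonneg_left (hu_diff i j) hMD0
      _ = (M_D * Bx) * ∑ j, |a j| * ‖row D j‖ := by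
          rw [Finset.mul_sum]
          exact Finset.sum_congr rfl fun j _ => by ring
      _ ≤ (M_D * Bx) * (‖a‖ * ‖D‖) :=
          mul_le_mul_of_nonneg_left hsum_row (mul_nonneg hMD0 hBx)
      _ = ‖a‖ * M_D * Bx * ‖D‖ := by ring
  have hg_bnd : ∀ (i : Fin n) (W : EuclideanSpace ℝ (Fin p × Fin d)),
      |(-(y i) * net σ a W (x i))| ≤ sp * ‖a‖ * Bσ := by
    intro i W
    rw [abs_mul, abs_neg, hy1 i, one_mul]
    have hnet : net σ a W (x i) = ∑ j, a j * σ ((inner ℝ (row W j) (x i) : ℝ)) := rfl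
    have hsum_a : ∑ j, |a j| ≤ ‖a‖ * sp := by
      have h2 := RGL.cs_sum (fun j => a j) (fun _ : Fin p => (1:ℝ))
      simp only [abs_one, mul_one, one_pow, Finset.sum_const, Finset.card_univ,
        Fintype.card_fin, nsmul_eq_mul] at h2
      calc ∑ j, |a j| ≤ Real.sqrt (∑ j, a j ^ 2) * Real.sqrt (p : ℝ) := h2
        _ = ‖a‖ * sp := by rw [← RGL.norm_eq_sqrt a, hsp_def]
    calc |net σ a W (x i)|
        ≤ ∑ j, |a j * σ ((inner ℝ (row W j) (x i) : ℝ))| := by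
          rw [hnet]; exact Finset.abs_sum_le_sum_abs _ _
      _ ≤ ∑ j, |a j| * Bσ := by
          apply Finset.sum_le_sum
          intro j _
          rw [abs_mul]
          exact mul_le_mul_of_nonneg_left (hB _) (abs_nonneg _)
      _ = (∑ j, |a j|) * Bσ := by rw [Finset.sum_mul]
      _ ≤ (‖a‖ * sp) * Bσ := mul_le_mul_of_nonneg_right hsum_a hBσ0
      _ = sp * ‖a‖ * Bσ := by ring
  -- per-entry bound for the data part of the gradient difference
  have key : ∀ (i : Fin n) (j : Fin p),
      |RGL.sg (-(y i) * net σ a W₁ (x i)) * (a j * deriv σ ((inner ℝ (row W₁ j) (x i) : ℝ)))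
        - RGL.sg (-(y i) * net σ a W₂ (x i)) * (a j * deriv σ ((inner ℝ (row W₂ j) (x i) : ℝ)))|
      ≤ |a j| * (S * M_D' * Bx * ‖row D j‖) + |a j| * (M_D ^ 2 / 4 * ‖a‖ * Bx * ‖D‖) := by
    intro i j
    set s1 := RGL.sg (-(y i) * net σ a W₁ (x i)) with hs1
    set s2 := RGL.sg (-(y i) * net σ a W₂ (x i)) with hs2
    set d1 := deriv σ ((inner ℝ (row W₁ j) (x i) : ℝ)) with hd1
    set d2 := deriv σ ((inner ℝ (row W₂ j) (x i) : ℝ)) with hd2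
    have hexp : s1 * (a j * d1) - s2 * (a j * d2)
        = a j * (s1 * (d1 - d2) + (s1 - s2) * d2) := by ring
    rw [hexp, abs_mul]
    have b1 : |s1| ≤ S := by
      rw [hs1, abs_of_nonneg (RGL.sg_nonneg _), hS_def]
      exact RGL.sg_le hG0 (le_trans (le_abs_self _) (hg_bnd i W₁))
    have b2 : |d1 - d2| ≤ M_D' * (Bx * ‖row D j‖) := by
      calc |d1 - d2|
          ≤ M_D' * |(inner ℝ (row W₁ j) (x i) : ℝ) - (inner ℝ (row W₂ j) (x i) : ℝ)| :=
            hσ'_lip _ _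
        _ ≤ M_D' * (Bx * ‖row D j‖) := mul_le_mul_of_nonneg_left (hu_diff i j) hMD'0
    have b3 : |s1 - s2| ≤ (‖a‖ * M_D * Bx * ‖D‖) / 4 := by
      calc |s1 - s2|
          ≤ |(-(y i) * net σ a W₁ (x i)) - (-(y i) * net σ a W₂ (x i))| / 4 := RGL.sg_lip _ _
        _ ≤ (‖a‖ * M_D * Bx * ‖D‖) / 4 := by linarith [hg_diff i]
    have b4 : |d2| ≤ M_D := hM _
    have hin : |s1 * (d1 - d2) + (s1 - s2) * d2|
        ≤ S * (M_D' * (Bx * ‖row D j‖)) + (‖a‖ * M_D * Bx * ‖D‖) / 4 * M_D := by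
      calc |s1 * (d1 - d2) + (s1 - s2) * d2|
          ≤ |s1 * (d1 - d2)| + |(s1 - s2) * d2| := abs_add_le _ _
        _ = |s1| * |d1 - d2| + |s1 - s2| * |d2| := by rw [abs_mul, abs_mul]
        _ ≤ S * (M_D' * (Bx * ‖row D j‖)) + (‖a‖ * M_D * Bx * ‖D‖) / 4 * M_D := by
            apply add_le_add
            · exact mul_le_mul b1 b2 (abs_nonneg _) hS0
            · apply mul_le_mul b3 b4 (abs_nonneg _)
              exact div_nonneg (mul_nonneg (mul_nonneg (mul_nonneg hna hMD0) hBx) hD0)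
                (by norm_num)
    calc |a j| * |s1 * (d1 - d2) + (s1 - s2) * d2|
        ≤ |a j| * (S * (M_D' * (Bx * ‖row D j‖)) + (‖a‖ * M_D * Bx * ‖D‖) / 4 * M_D) :=
          mul_le_mul_of_nonneg_left hin (abs_nonneg _)
      _ = |a j| * (S * M_D' * Bx * ‖row D j‖) + |a j| * (M_D ^ 2 / 4 * ‖a‖ * Bx * ‖D‖) := by
          ring
  -- the vector-level decomposition
  have hdecomp : Gvec σ a x y lam W₁ - Gvec σ a x y lam W₂
      = (1 / (n : ℝ)) • (∑ i, RGL.Tv σ a x y W₁ W₂ i) + lam • D := by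
    ext q
    simp only [PiLp.sub_apply, PiLp.add_apply, PiLp.smul_apply, smul_eq_mul]
    rw [show (∑ i, RGL.Tv σ a x y W₁ W₂ i) q = ∑ i, RGL.Tv σ a x y W₁ W₂ i q from
      by rw [WithLp.ofLp_sum, Finset.sum_apply]]
    simp only [RGL.Tv, RGL.vec_apply, Gvec, hD_def, PiLp.sub_apply]
    have hsum : ∑ i, (-(y i) *
        (RGL.sg (-(y i) * net σ a W₁ (x i)) * (a q.1 * deriv σ ((inner ℝ (row W₁ q.1) (x i) : ℝ)))
          - RGL.sg (-(y i) * net σ a W₂ (x i)) *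
            (a q.1 * deriv σ ((inner ℝ (row W₂ q.1) (x i) : ℝ))))
        * x i q.2)
        = (∑ i, RGL.sg (-(y i) * net σ a W₁ (x i)) * (-(y i)) *
            (a q.1 * deriv σ ((inner ℝ (row W₁ q.1) (x i) : ℝ))) * x i q.2)
          - (∑ i, RGL.sg (-(y i) * net σ a W₂ (x i)) * (-(y i)) *
            (a q.1 * deriv σ ((inner ℝ (row W₂ q.1) (x i) : ℝ))) * x i q.2) := by
      rw [← Finset.sum_sub_distrib]
      apply Finset.sum_congr rfl
      intro i _
      ring
    rw [hsum]
    ring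
  -- norm bound for each summand
  have hK0 : 0 ≤ S * M_D' * Bx * ‖a‖ * ‖D‖ + M_D ^ 2 / 4 * ‖a‖ ^ 2 * Bx * ‖D‖ := by
    have h1 : 0 ≤ S * M_D' * Bx * ‖a‖ * ‖D‖ :=
      mul_nonneg (mul_nonneg (mul_nonneg (mul_nonneg hS0 hMD'0) hBx) hna) hD0
    have h2 : 0 ≤ M_D ^ 2 / 4 * ‖a‖ ^ 2 * Bx * ‖D‖ :=
      mul_nonneg (mul_nonneg (mul_nonneg (by positivity) (sq_nonneg _)) hBx) hD0
    linarith
  have hTv_norm : ∀ i, ‖RGL.Tv σ a x y W₁ W₂ i‖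
      ≤ (S * M_D' * Bx * ‖a‖ * ‖D‖ + M_D ^ 2 / 4 * ‖a‖ ^ 2 * Bx * ‖D‖) * Bx := by
    intro i
    have houter : ‖RGL.Tv σ a x y W₁ W₂ i‖ = |(-(y i))| *
        (‖RGL.vec (fun j : Fin p =>
          RGL.sg (-(y i) * net σ a W₁ (x i)) * (a j * deriv σ ((inner ℝ (row W₁ j) (x i) : ℝ)))
            - RGL.sg (-(y i) * net σ a W₂ (x i)) *
              (a j * deriv σ ((inner ℝ (row W₂ j) (x i) : ℝ))))‖ * ‖x i‖) :=
      RGL.norm_outer (-(y i)) (fun j : Fin p =>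
        RGL.sg (-(y i) * net σ a W₁ (x i)) * (a j * deriv σ ((inner ℝ (row W₁ j) (x i) : ℝ)))
          - RGL.sg (-(y i) * net σ a W₂ (x i)) *
            (a j * deriv σ ((inner ℝ (row W₂ j) (x i) : ℝ)))) (x i)
    rw [houter, abs_neg, hy1 i, one_mul]
    have hstep1 : ‖RGL.vec (fun j : Fin p =>
        RGL.sg (-(y i) * net σ a W₁ (x i)) * (a j * deriv σ ((inner ℝ (row W₁ j) (x i) : ℝ)))
          - RGL.sg (-(y i) * net σ a W₂ (x i)) *
            (a j * deriv σ ((inner ℝ (row W₂ j) (x i) : ℝ))))‖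
        ≤ ‖RGL.vec (fun j : Fin p => (S * M_D' * Bx) * (|a j| * ‖row D j‖))
            + RGL.vec (fun j : Fin p => (M_D ^ 2 / 4 * ‖a‖ * Bx * ‖D‖) * |a j|)‖ := by
      apply RGL.norm_le_of_abs_le
      intro j
      have happ : (RGL.vec (fun j : Fin p => (S * M_D' * Bx) * (|a j| * ‖row D j‖))
          + RGL.vec (fun j : Fin p => (M_D ^ 2 / 4 * ‖a‖ * Bx * ‖D‖) * |a j|)) j
          = (S * M_D' * Bx) * (|a j| * ‖row D j‖)
            + (M_D ^ 2 / 4 * ‖a‖ * Bx * ‖D‖) * |a j| := by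
        simp [PiLp.add_apply]
      rw [happ]
      calc |RGL.vec (fun j : Fin p =>
          RGL.sg (-(y i) * net σ a W₁ (x i)) * (a j * deriv σ ((inner ℝ (row W₁ j) (x i) : ℝ)))
            - RGL.sg (-(y i) * net σ a W₂ (x i)) *
              (a j * deriv σ ((inner ℝ (row W₂ j) (x i) : ℝ)))) j|
          ≤ |a j| * (S * M_D' * Bx * ‖row D j‖) + |a j| * (M_D ^ 2 / 4 * ‖a‖ * Bx * ‖D‖) :=
            key i j
        _ = (S * M_D' * Bx) * (|a j| * ‖row D j‖)
            + (M_D ^ 2 / 4 * ‖a‖ * Bx * ‖D‖) * |a j| := by ring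
    have hA : ‖RGL.vec (fun j : Fin p => (S * M_D' * Bx) * (|a j| * ‖row D j‖))‖
        ≤ S * M_D' * Bx * ‖a‖ * ‖D‖ := by
      rw [RGL.norm_vec_smul, abs_of_nonneg (mul_nonneg (mul_nonneg hS0 hMD'0) hBx)]
      have h1 : ‖RGL.vec (fun j : Fin p => |a j| * ‖row D j‖)‖
          ≤ ‖RGL.vec (fun j : Fin p => ‖D‖ * |a j|)‖ := by
        apply RGL.norm_le_of_abs_le
        intro j
        rw [RGL.vec_apply, RGL.vec_apply,
          abs_of_nonneg (mul_nonneg (abs_nonneg _) (norm_nonneg _))]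
        calc |a j| * ‖row D j‖ ≤ |a j| * ‖D‖ :=
            mul_le_mul_of_nonneg_left (hrow_le j) (abs_nonneg _)
          _ = ‖D‖ * |a j| := mul_comm _ _
      have h2 : ‖RGL.vec (fun j : Fin p => ‖D‖ * |a j|)‖ = ‖D‖ * ‖a‖ := by
        rw [RGL.norm_vec_smul, abs_of_nonneg hD0, RGL.norm_vec_abs]
      calc (S * M_D' * Bx) * ‖RGL.vec (fun j : Fin p => |a j| * ‖row D j‖)‖
          ≤ (S * M_D' * Bx) * (‖D‖ * ‖a‖) := by
            apply mul_le_mul_of_nonneg_left _ (mul_nonneg (mul_nonneg hS0 hMD'0) hBx)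
            rw [← h2]; exact h1
        _ = S * M_D' * Bx * ‖a‖ * ‖D‖ := by ring
    have hBv : ‖RGL.vec (fun j : Fin p => (M_D ^ 2 / 4 * ‖a‖ * Bx * ‖D‖) * |a j|)‖
        = M_D ^ 2 / 4 * ‖a‖ ^ 2 * Bx * ‖D‖ := by
      rw [RGL.norm_vec_smul, RGL.norm_vec_abs,
        abs_of_nonneg (mul_nonneg (mul_nonneg (mul_nonneg (by positivity) hna) hBx) hD0)]
      ring
    have hbig : ‖RGL.vec (fun j : Fin p =>
        RGL.sg (-(y i) * net σ a W₁ (x i)) * (a j * deriv σ ((inner ℝ (row W₁ j) (x i) : ℝ)))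
          - RGL.sg (-(y i) * net σ a W₂ (x i)) *
            (a j * deriv σ ((inner ℝ (row W₂ j) (x i) : ℝ))))‖
        ≤ S * M_D' * Bx * ‖a‖ * ‖D‖ + M_D ^ 2 / 4 * ‖a‖ ^ 2 * Bx * ‖D‖ := by
      refine le_trans hstep1 (le_trans (norm_add_le _ _) ?_)
      rw [hBv]
      exact add_le_add hA le_rfl
    exact mul_le_mul hbig (hx i) (norm_nonneg _) hK0
  -- final assembly
  rw [hdecomp]
  calc ‖(1 / (n : ℝ)) • (∑ i, RGL.Tv σ a x y W₁ W₂ i) + lam • D‖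
      ≤ ‖(1 / (n : ℝ)) • (∑ i, RGL.Tv σ a x y W₁ W₂ i)‖ + ‖lam • D‖ := norm_add_le _ _
    _ = (1 / (n : ℝ)) * ‖∑ i, RGL.Tv σ a x y W₁ W₂ i‖ + lam * ‖D‖ := by
        rw [norm_smul, norm_smul, Real.norm_eq_abs, Real.norm_eq_abs,
          abs_of_nonneg hninv, abs_of_nonneg hlam.le]
    _ ≤ (1 / (n : ℝ)) * ((n : ℝ) *
          ((S * M_D' * Bx * ‖a‖ * ‖D‖ + M_D ^ 2 / 4 * ‖a‖ ^ 2 * Bx * ‖D‖) * Bx))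
        + lam * ‖D‖ := by
        refine add_le_add ?_ le_rfl
        apply mul_le_mul_of_nonneg_left _ hninv
        calc ‖∑ i, RGL.Tv σ a x y W₁ W₂ i‖ ≤ ∑ i, ‖RGL.Tv σ a x y W₁ W₂ i‖ :=
              norm_sum_le _ _
          _ ≤ ∑ _i : Fin n,
                ((S * M_D' * Bx * ‖a‖ * ‖D‖ + M_D ^ 2 / 4 * ‖a‖ ^ 2 * Bx * ‖D‖) * Bx) :=
              Finset.sum_le_sum fun i _ => hTv_norm i
          _ = (n : ℝ) *
                ((S * M_D' * Bx * ‖a‖ * ‖D‖ + M_D ^ 2 / 4 * ‖a‖ ^ 2 * Bx * ‖D‖) * Bx) := by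
              rw [Finset.sum_const, Finset.card_univ, Fintype.card_fin, nsmul_eq_mul]
    _ = (S * M_D' * Bx ^ 2 * ‖a‖ + M_D ^ 2 * ‖a‖ ^ 2 * Bx ^ 2 / 4 + lam) * ‖D‖ := by
        rw [← mul_assoc, one_div_mul_cancel hn0, one_mul]
        ring

end

/-- The gradient of the regularized logistic empirical risk is Lipschitz with constant at
most `√p (√p ‖a‖² M_D² B_x²/4 + ((2 + ‖c‖ + ‖a‖ B_σ)/4) M_D' B_x² ‖a‖ p + λ)`, where
`‖c‖ = √p |c₀|`. -/
theorem risk_gradient_lipschitz {p d n : ℕ} (hn : 0 < n) (σ : ℝ → ℝ)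
    (M_D M_D' Bσ c₀ Bx lam : ℝ)
    (hσ : ContDiff ℝ 2 σ) (hB : ∀ t : ℝ, |σ t| ≤ Bσ)
    (hM : ∀ t : ℝ, |deriv σ t| ≤ M_D)
    (hM' : ∀ t : ℝ, |deriv (deriv σ) t| ≤ M_D') (hσ0 : σ 0 = c₀)
    (a : EuclideanSpace ℝ (Fin p))
    (x : Fin n → EuclideanSpace ℝ (Fin d)) (y : Fin n → ℝ)
    (hx : ∀ i, ‖x i‖ ≤ Bx) (hBx : 0 ≤ Bx) (hy : ∀ i, y i = 1 ∨ y i = -1)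
    (hlam : 0 < lam) :
    ∀ W₁ W₂ : EuclideanSpace ℝ (Fin p × Fin d),
      ‖gradient (risk σ a x y lam) W₁ - gradient (risk σ a x y lam) W₂‖ ≤
        Real.sqrt p *
            (Real.sqrt p * ‖a‖ ^ 2 * M_D ^ 2 * Bx ^ 2 / 4 +
              ((2 + Real.sqrt p * |c₀| + ‖a‖ * Bσ) / 4) * M_D' * Bx ^ 2 * ‖a‖ * p + lam) *
          ‖W₁ - W₂‖ := by
  intro W₁ W₂
  rcases Nat.eq_zero_or_pos p with hp0 | hp
  · subst hp0
    have hW : W₁ = W₂ := PiLp.ext fun q => (q.1).elim0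
    rw [hW]
    simp
  · rw [(risk_hasGradientAt σ hσ a x y lam W₁).gradient,
        (risk_hasGradientAt σ hσ a x y lam W₂).gradient]
    refine le_trans (RGL.gvec_diff_le hn σ M_D M_D' Bσ Bx lam hσ hB hM hM' a x y hx hBx hy
      hlam W₁ W₂) ?_
    apply mul_le_mul_of_nonneg_right _ (norm_nonneg _)
    have hMD0 : 0 ≤ M_D := le_trans (abs_nonneg _) (hM 0)
    have hMD'0 : 0 ≤ M_D' := le_trans (abs_nonneg _) (hM' 0)
    have hBσ0 : 0 ≤ Bσ := le_trans (abs_nonneg _) (hB 0)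
    have hc0 : 0 ≤ |c₀| := abs_nonneg _
    have hna : 0 ≤ ‖a‖ := norm_nonneg a
    set sp := Real.sqrt p with hsp_def
    have hsp0 : 0 ≤ sp := Real.sqrt_nonneg _
    have hsp1 : 1 ≤ sp := by
      rw [hsp_def, show (1:ℝ) = Real.sqrt 1 from Real.sqrt_one.symm]
      exact Real.sqrt_le_sqrt (by exact_mod_cast hp)
    have hsp2 : (p : ℝ) = sp ^ 2 := (Real.sq_sqrt (by positivity)).symm
    rw [hsp2]
    have h3 : 1 ≤ sp ^ 3 := by nlinarith
    have h13 : sp ≤ sp ^ 3 := by nlinarith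
    have hsq1 : 1 ≤ sp ^ 2 := by nlinarith
    have hmid : (2 + sp * ‖a‖ * Bσ) / 4 * M_D' * Bx ^ 2 * ‖a‖
        ≤ sp * ((2 + sp * |c₀| + ‖a‖ * Bσ) / 4 * M_D' * Bx ^ 2 * ‖a‖ * sp ^ 2) := by
      have hfac : 2 + sp * ‖a‖ * Bσ ≤ sp ^ 3 * (2 + sp * |c₀| + ‖a‖ * Bσ) := by
        nlinarith [mul_nonneg (sub_nonneg.mpr h13) (mul_nonneg hna hBσ0),
          mul_nonneg (mul_nonneg (mul_nonneg (mul_nonneg hsp0 hsp0) hsp0) hsp0) hc0, h3]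
      calc (2 + sp * ‖a‖ * Bσ) / 4 * M_D' * Bx ^ 2 * ‖a‖
          = (2 + sp * ‖a‖ * Bσ) * (M_D' * Bx ^ 2 * ‖a‖ / 4) := by ring
        _ ≤ (sp ^ 3 * (2 + sp * |c₀| + ‖a‖ * Bσ)) * (M_D' * Bx ^ 2 * ‖a‖ / 4) := by
            apply mul_le_mul_of_nonneg_right hfac
            exact div_nonneg (mul_nonneg (mul_nonneg hMD'0 (sq_nonneg Bx)) hna) (by norm_num)
        _ = sp * ((2 + sp * |c₀| + ‖a‖ * Bσ) / 4 * M_D' * Bx ^ 2 * ‖a‖ * sp ^ 2) := by ring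
    have ht1 : M_D ^ 2 * ‖a‖ ^ 2 * Bx ^ 2 / 4 ≤ sp * (sp * ‖a‖ ^ 2 * M_D ^ 2 * Bx ^ 2 / 4) := by
      nlinarith [mul_nonneg (sub_nonneg.mpr hsq1) (sq_nonneg (M_D * ‖a‖ * Bx))]
    have ht3 : lam ≤ sp * lam := by
      nlinarith [mul_nonneg (sub_nonneg.mpr hsp1) hlam.le]
    calc (2 + sp * ‖a‖ * Bσ) / 4 * M_D' * Bx ^ 2 * ‖a‖ + M_D ^ 2 * ‖a‖ ^ 2 * Bx ^ 2 / 4 + lam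
        ≤ sp * ((2 + sp * |c₀| + ‖a‖ * Bσ) / 4 * M_D' * Bx ^ 2 * ‖a‖ * sp ^ 2)
          + sp * (sp * ‖a‖ ^ 2 * M_D ^ 2 * Bx ^ 2 / 4) + sp * lam := by linarith
      _ = sp * (sp * ‖a‖ ^ 2 * M_D ^ 2 * Bx ^ 2 / 4
          + (2 + sp * |c₀| + ‖a‖ * Bσ) / 4 * M_D' * Bx ^ 2 * ‖a‖ * sp ^ 2 + lam) := by ring
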